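/- For 1 ≤ k < n, the number of permutations σ of {1,...,n} avoiding 231 and 3124 with σ(k) = 1 equals k times the number of permutations of {1,...,n-k} avoiding 231 and 3124. -/

import Mathlib

def Avoids231 {n : ℕ} (σ : Equiv.Perm (Fin n)) : Prop :=
  ¬ ∃ i j k : Fin n, i < j ∧ j < k ∧ σ k < σ i ∧ σ i < σ j

def Avoids3124 {n : ℕ} (σ : Equiv.Perm (Fin n)) : Prop :=
  ¬ ∃ i j k l : Fin n, i < j ∧ j < k ∧ k < l ∧ σ j < σ k ∧ σ k < σ i ∧ σ i < σ l

/-!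
Write positions and values 0-indexed, so that `σ (k - 1) = 0`. Avoiding 231 forces `σ` to
decrease on the first `k` positions, and avoiding 231 and 3124 forbids a value at one of these
positions to lie strictly between two values at later positions. Hence the last `n - k` values
form an interval `[j + 1, j + n - k]` with `j < k`, the first `k` positions carry the remaining
values in decreasing order, and `σ` avoids both patterns iff the standardization `τ` of its last
`n - k` entries does. So `σ ↦ (j, τ)` is a bijection onto `Fin k × Av_{n-k}(231, 3124)`.
-/

open Equiv

theorem Finset.eq_Ico_min'_of_ordConnected {S : Finset ℕ} (hS : (S : Set ℕ).OrdConnected)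
    (hne : S.Nonempty) : S = Finset.Ico (S.min' hne) (S.min' hne + S.card) := by
  have hsub : S ⊆ Finset.Ico (S.min' hne) (S.min' hne + S.card) := by
    intro x hx
    have hIcc : Finset.Icc (S.min' hne) x ⊆ S := fun v hv => by
      simpa using hS.out (S.min'_mem hne) hx (by simpa using hv)
    have := Finset.card_le_card hIcc
    rw [Nat.card_Icc] at this
    have := S.min'_le x hx
    rw [Finset.mem_Ico]
    omega
  exact Finset.eq_of_subset_of_card_le hsub (by simp)

section Suffix

variable {n k : ℕ}

def suffixPos (k : ℕ) (t : Fin (n - k)) : Fin n := ⟨k + t, by omega⟩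

@[simp]
lemma suffixPos_val (t : Fin (n - k)) : (suffixPos k t).val = k + t := rfl

lemma suffixPos_lt_suffixPos {t t' : Fin (n - k)} : suffixPos k t < suffixPos k t' ↔ t < t' := by
  rw [Fin.lt_def, Fin.lt_def, suffixPos_val, suffixPos_val]; omega

lemma suffixPos_injective : Function.Injective (suffixPos (n := n) k) :=
  fun t t' h => Fin.ext (by simpa using congrArg Fin.val h)

lemma exists_suffixPos_eq {i : Fin n} (hi : k ≤ i.val) : ∃ t : Fin (n - k), suffixPos k t = i :=
  ⟨⟨i - k, by omega⟩, Fin.ext (by simp only [suffixPos_val]; omega)⟩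

lemma exists_perm_suffixPos_eq_add {σ : Perm (Fin n)} {m : ℕ}
    (h : ∀ t : Fin (n - k), m ≤ σ (suffixPos k t) ∧ (σ (suffixPos k t)).val < m + (n - k)) :
    ∃ τ : Perm (Fin (n - k)), ∀ t, (σ (suffixPos k t)).val = m + τ t := by
  let f (t : Fin (n - k)) : Fin (n - k) := ⟨σ (suffixPos k t) - m, by have := h t; omega⟩
  have hf : Function.Injective f := fun t t' htt' => by
    have := h t; have := h t'
    simp only [f, Fin.mk.injEq] at htt'
    exact suffixPos_injective (σ.injective (Fin.ext (by omega)))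
  exact ⟨Equiv.ofBijective f hf.bijective_of_finite, fun t => by
    have := h t; simp only [ofBijective_apply, f]; omega⟩

end Suffix

structure IsSeparatedDecreasingPrefix {n : ℕ} (k : ℕ) (σ : Perm (Fin n)) : Prop where
  strictAntiOn : StrictAntiOn σ {i | i.val < k}
  not_between :
    ∀ a s s' : Fin n, a.val < k → k ≤ s.val → k ≤ s'.val → ¬(σ s < σ a ∧ σ a < σ s')

section PatternOfSuffix

variable {n k : ℕ} {σ : Perm (Fin n)} {τ : Perm (Fin (n - k))}

lemma avoids231_iff_of_suffix (hp : IsSeparatedDecreasingPrefix k σ)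
    (hτ : ∀ t t', σ (suffixPos k t) < σ (suffixPos k t') ↔ τ t < τ t') :
    Avoids231 σ ↔ Avoids231 τ := by
  constructor
  · rintro h ⟨a, b, c, hab, hbc, h1, h2⟩
    exact h ⟨_, _, _, suffixPos_lt_suffixPos.2 hab, suffixPos_lt_suffixPos.2 hbc,
      (hτ _ _).2 h1, (hτ _ _).2 h2⟩
  · rintro h ⟨a, b, c, hab, hbc, h1, h2⟩
    have hb : k ≤ b.val := by
      by_contra! hb
      exact (hp.strictAntiOn ((Fin.lt_def.1 hab).trans hb) hb hab).not_gt h2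
    have hc : k ≤ c.val := hb.trans hbc.le
    have ha : k ≤ a.val := by
      by_contra! ha
      exact hp.not_between a c b ha hc hb ⟨h1, h2⟩
    obtain ⟨a, rfl⟩ := exists_suffixPos_eq ha
    obtain ⟨b, rfl⟩ := exists_suffixPos_eq hb
    obtain ⟨c, rfl⟩ := exists_suffixPos_eq hc
    exact h ⟨a, b, c, suffixPos_lt_suffixPos.1 hab, suffixPos_lt_suffixPos.1 hbc,
      (hτ _ _).1 h1, (hτ _ _).1 h2⟩

lemma avoids3124_iff_of_suffix (hp : IsSeparatedDecreasingPrefix k σ)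
    (hτ : ∀ t t', σ (suffixPos k t) < σ (suffixPos k t') ↔ τ t < τ t') :
    Avoids3124 σ ↔ Avoids3124 τ := by
  constructor
  · rintro h ⟨a, b, c, d, hab, hbc, hcd, h1, h2, h3⟩
    exact h ⟨_, _, _, _, suffixPos_lt_suffixPos.2 hab, suffixPos_lt_suffixPos.2 hbc,
      suffixPos_lt_suffixPos.2 hcd, (hτ _ _).2 h1, (hτ _ _).2 h2, (hτ _ _).2 h3⟩
  · rintro h ⟨a, b, c, d, hab, hbc, hcd, h1, h2, h3⟩
    have hc : k ≤ c.val := by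
      by_contra! hc
      exact (hp.strictAntiOn ((Fin.lt_def.1 hbc).trans hc) hc hbc).not_gt h1
    have hd : k ≤ d.val := hc.trans hcd.le
    have ha : k ≤ a.val := by
      by_contra! ha
      exact hp.not_between a c d ha hc hd ⟨h2, h3⟩
    have hb : k ≤ b.val := ha.trans hab.le
    obtain ⟨a, rfl⟩ := exists_suffixPos_eq ha
    obtain ⟨b, rfl⟩ := exists_suffixPos_eq hb
    obtain ⟨c, rfl⟩ := exists_suffixPos_eq hc
    obtain ⟨d, rfl⟩ := exists_suffixPos_eq hd
    exact h ⟨a, b, c, d, suffixPos_lt_suffixPos.1 hab, suffixPos_lt_suffixPos.1 hbc,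
      suffixPos_lt_suffixPos.1 hcd, (hτ _ _).1 h1, (hτ _ _).1 h2, (hτ _ _).1 h3⟩

end PatternOfSuffix

section MinimumAt

variable {n : ℕ} {σ : Perm (Fin n)} {c : Fin n}

lemma Avoids231.strictAntiOn_Iic (h : Avoids231 σ) (hc : ∀ x, σ c ≤ σ x) :
    StrictAntiOn σ (Set.Iic c) := by
  intro a _ b hb hab
  rcases (Set.mem_Iic.1 hb).lt_or_eq with hbc | rfl
  · by_contra! hle
    exact h ⟨a, b, c, hab, hbc,
      (hc a).lt_of_ne (σ.injective.ne (hab.trans hbc).ne'),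
      hle.lt_of_ne (σ.injective.ne hab.ne)⟩
  · exact (hc a).lt_of_ne (σ.injective.ne hab.ne')

lemma not_between_of_avoids (h231 : Avoids231 σ) (h3124 : Avoids3124 σ)
    (hc : ∀ x, σ c ≤ σ x) {a s s' : Fin n} (hac : a ≤ c) (hs : c < s) (hs' : c < s') :
    ¬(σ s < σ a ∧ σ a < σ s') := by
  rintro ⟨h1, h2⟩
  obtain rfl | hac := hac.eq_or_lt
  · exact (hc s).not_gt h1
  rcases lt_trichotomy s s' with hss | rfl | hss
  · -- the minimum at `c` plays the role of the `1` in `3124`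
    exact h3124 ⟨a, c, s, s', hac, hs, hss, (hc s).lt_of_ne (σ.injective.ne hs.ne), h1, h2⟩
  · exact lt_asymm h1 h2
  · exact h231 ⟨a, s', s, hac.trans hs', hss, h1, h2⟩

lemma isSeparatedDecreasingPrefix_of_avoids (h231 : Avoids231 σ) (h3124 : Avoids3124 σ)
    (hc : ∀ x, σ c ≤ σ x) : IsSeparatedDecreasingPrefix (c.val + 1) σ where
  strictAntiOn :=
    (h231.strictAntiOn_Iic hc).mono fun _ hi => Fin.le_def.2 (Nat.lt_succ_iff.1 hi)
  not_between _ _ _ ha hs hs' :=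
    not_between_of_avoids h231 h3124 hc (Fin.le_def.2 (Nat.lt_succ_iff.1 ha))
      (Fin.lt_def.2 hs) (Fin.lt_def.2 hs')

end MinimumAt

lemma IsSeparatedDecreasingPrefix.ordConnected_suffix_values {n k : ℕ} {σ : Perm (Fin n)}
    (hp : IsSeparatedDecreasingPrefix k σ) :
    ((Finset.univ.image fun t : Fin (n - k) => (σ (suffixPos k t)).val : Finset ℕ) :
      Set ℕ).OrdConnected := by
  refine ⟨?_⟩
  rintro _ hx _ hy v ⟨hxv, hvy⟩
  obtain ⟨t, -, rfl⟩ := Finset.mem_image.1 hx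
  obtain ⟨t', -, rfl⟩ := Finset.mem_image.1 hy
  have hvn : v < n := hvy.trans_lt (σ _).isLt
  set i := σ.symm ⟨v, hvn⟩
  have hσi : σ i = ⟨v, hvn⟩ := σ.apply_symm_apply _
  by_cases hi : k ≤ i.val
  · obtain ⟨t'', ht''⟩ := exists_suffixPos_eq hi
    rw [Finset.mem_coe, ← Fin.val_mk hvn, ← hσi, ← ht'']
    exact Finset.mem_image_of_mem _ (Finset.mem_univ t'')
  · have hne : ∀ t, σ (suffixPos k t) ≠ σ i := fun t h =>
      hi (σ.injective h ▸ Nat.le_add_right k t)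
    refine absurd ⟨?_, ?_⟩ (hp.not_between i (suffixPos k t) (suffixPos k t') (not_le.1 hi)
      (Nat.le_add_right k t) (Nat.le_add_right k t'))
    · exact lt_of_le_of_ne (by rw [hσi]; exact hxv) (hne t)
    · exact lt_of_le_of_ne (by rw [hσi]; exact hvy) (hne t').symm

lemma exists_suffix_values_Ico {n k : ℕ} (hkn : k < n) {σ : Perm (Fin n)}
    (hp : IsSeparatedDecreasingPrefix k σ) {c : Fin n} (hck : c.val < k) (hc : (σ c).val = 0) :
    ∃ m, 0 < m ∧ m ≤ k ∧
      ∀ t : Fin (n - k), m ≤ σ (suffixPos k t) ∧ (σ (suffixPos k t)).val < m + (n - k) := by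
  set S := (Finset.univ : Finset (Fin (n - k))).image fun t => (σ (suffixPos k t)).val
  have hcard : S.card = n - k := by
    rw [Finset.card_image_of_injective _ fun t t' h =>
      suffixPos_injective (σ.injective (Fin.ext h)), Finset.card_univ, Fintype.card_fin]
  have hmemS : ∀ t, (σ (suffixPos k t)).val ∈ S := fun t =>
    Finset.mem_image_of_mem _ (Finset.mem_univ t)
  have hne : S.Nonempty := ⟨_, hmemS ⟨0, by omega⟩⟩
  have hS : S = Finset.Ico (S.min' hne) (S.min' hne + S.card) :=
    Finset.eq_Ico_min'_of_ordConnected hp.ordConnected_suffix_values hne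
  set m := S.min' hne
  have hbounds : ∀ t, m ≤ σ (suffixPos k t) ∧ (σ (suffixPos k t)).val < m + (n - k) := by
    intro t
    have := hmemS t
    rwa [hS, hcard, Finset.mem_Ico] at this
  refine ⟨m, ?_, ?_, hbounds⟩
  · obtain ⟨t, -, ht⟩ := Finset.mem_image.1 (S.min'_mem hne)
    refine Nat.pos_of_ne_zero fun hm => ?_
    have : suffixPos k t = c := σ.injective (Fin.ext (by rw [ht, hc]; exact hm))
    have := congrArg Fin.val this
    simp only [suffixPos_val] at this
    omega
  · have hlast : m + (n - k) - 1 ∈ S := by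
      rw [hS, hcard, Finset.mem_Ico]
      omega
    obtain ⟨t, -, ht⟩ := Finset.mem_image.1 hlast
    have := (σ (suffixPos k t)).isLt
    omega

lemma eq_of_strictAntiOn_of_eqOn_suffix {n k : ℕ} (hkn : k ≤ n) {σ ρ : Perm (Fin n)}
    (hσ : StrictAntiOn σ {i | i.val < k}) (hρ : StrictAntiOn ρ {i | i.val < k})
    (h : ∀ i : Fin n, k ≤ i.val → σ i = ρ i) : σ = ρ := by
  have hanti : ∀ π : Perm (Fin n), StrictAntiOn π {i | i.val < k} →
      StrictAnti fun p : Fin k => π (Fin.castLE hkn p) :=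
    fun π hπ p q hpq => hπ p.isLt q.isLt hpq
  have hrange : ∀ π : Perm (Fin n), Set.range (fun p : Fin k => π (Fin.castLE hkn p)) =
      {v | (π.symm v).val < k} := by
    intro π
    ext v
    refine ⟨?_, fun hv => ⟨⟨_, hv⟩, π.apply_symm_apply v⟩⟩
    rintro ⟨p, rfl⟩
    simp
  have hsymm : ∀ v, k ≤ (σ.symm v).val → ρ.symm v = σ.symm v := fun v hv =>
    ρ.symm_apply_eq.2 (by rw [← h _ hv, σ.apply_symm_apply])
  have hsymm' : ∀ v, k ≤ (ρ.symm v).val → σ.symm v = ρ.symm v := fun v hv =>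
    σ.symm_apply_eq.2 (by rw [h _ hv, ρ.apply_symm_apply])
  have hpre : (fun p : Fin k => σ (Fin.castLE hkn p)) = fun p => ρ (Fin.castLE hkn p) := by
    refine ((hanti σ hσ).range_inj (hanti ρ hρ)).1 ?_
    rw [hrange, hrange]
    ext v
    constructor
    · exact fun hv => not_le.1 fun hv' => (not_le.2 hv) (hsymm' v hv' ▸ hv')
    · exact fun hv => not_le.1 fun hv' => (not_le.2 hv) (hsymm v hv' ▸ hv')
  ext1 i
  rcases lt_or_ge i.val k with hi | hi
  · exact congrFun hpre ⟨i, hi⟩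
  · exact h i hi

section BlockPerm

variable {n k : ℕ} (j : Fin k) (τ : Perm (Fin (n - k)))

def blockVal (i : Fin n) : ℕ :=
  if i.val < k - 1 - j then n - 1 - i
  else if h : i.val < k then k - 1 - i
  else j + 1 + τ ⟨i - k, by omega⟩

lemma blockVal_suffixPos (t : Fin (n - k)) : blockVal j τ (suffixPos k t) = j + 1 + τ t := by
  have hsub : (⟨k + t - k, by omega⟩ : Fin (n - k)) = t := Fin.ext (by simp)
  simp only [blockVal, suffixPos_val, hsub]
  rw [if_neg (by omega), dif_neg (by omega)]

variable (hkn : k ≤ n)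
include hkn in
lemma blockVal_le_or_gt {i : Fin n} (hi : i.val < k) :
    blockVal j τ i ≤ j ∨ n - k + j < blockVal j τ i := by
  have := i.isLt
  unfold blockVal
  split_ifs <;> omega

include hkn in
lemma blockVal_lt_blockVal {i i' : Fin n} (hii' : i < i') (hi' : i'.val < k) :
    blockVal j τ i' < blockVal j τ i := by
  have := i'.isLt
  have := Fin.lt_def.1 hii'
  unfold blockVal
  split_ifs <;> omega

include hkn in
lemma blockVal_lt (i : Fin n) : blockVal j τ i < n := by
  rcases lt_or_ge i.val k with hi | hi
  · have := i.isLt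
    unfold blockVal
    split_ifs <;> omega
  · obtain ⟨t, rfl⟩ := exists_suffixPos_eq hi
    rw [blockVal_suffixPos]
    have := (τ t).isLt
    omega

include hkn in
lemma blockVal_injective : Function.Injective (blockVal (n := n) j τ) := by
  intro i i' h
  rcases lt_or_ge i.val k with hi | hi <;> rcases lt_or_ge i'.val k with hi' | hi'
  · by_contra hne
    rcases lt_or_gt_of_ne hne with hlt | hlt
    · exact (blockVal_lt_blockVal j τ hkn hlt hi').ne' h
    · exact (blockVal_lt_blockVal j τ hkn hlt hi).ne h
  · obtain ⟨t, rfl⟩ := exists_suffixPos_eq hi'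
    have hout := blockVal_le_or_gt j τ hkn hi
    have := (τ t).isLt
    rw [h, blockVal_suffixPos] at hout
    omega
  · obtain ⟨t, rfl⟩ := exists_suffixPos_eq hi
    have hout := blockVal_le_or_gt j τ hkn hi'
    have := (τ t).isLt
    rw [← h, blockVal_suffixPos] at hout
    omega
  · obtain ⟨t, rfl⟩ := exists_suffixPos_eq hi
    obtain ⟨t', rfl⟩ := exists_suffixPos_eq hi'
    rw [blockVal_suffixPos, blockVal_suffixPos] at h
    exact congrArg _ (τ.injective (Fin.ext (by omega)))

noncomputable def blockPerm : Perm (Fin n) :=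
  Equiv.ofBijective (fun i => ⟨blockVal j τ i, blockVal_lt j τ hkn i⟩)
    (Function.Injective.bijective_of_finite fun _ _ h =>
      blockVal_injective j τ hkn (congrArg Fin.val h))

lemma blockPerm_val (i : Fin n) : (blockPerm j τ hkn i).val = blockVal j τ i := rfl

lemma blockPerm_val_eq_zero {c : Fin n} (hc : c.val + 1 = k) :
    (blockPerm j τ hkn c).val = 0 := by
  rw [blockPerm_val, blockVal, if_neg (by omega), dif_pos (by omega)]
  omega

lemma isSeparatedDecreasingPrefix_blockPerm :
    IsSeparatedDecreasingPrefix k (blockPerm j τ hkn) where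
  strictAntiOn _ _ _ hi' hii' := blockVal_lt_blockVal j τ hkn hii' hi'
  not_between _ _ _ ha hs hs' := by
    obtain ⟨t, rfl⟩ := exists_suffixPos_eq hs
    obtain ⟨t', rfl⟩ := exists_suffixPos_eq hs'
    have := blockVal_le_or_gt j τ hkn ha
    have := (τ t').isLt
    simp only [Fin.lt_def, blockPerm_val, blockVal_suffixPos]
    omega

lemma blockPerm_suffixPos_lt_iff (t t' : Fin (n - k)) :
    blockPerm j τ hkn (suffixPos k t) < blockPerm j τ hkn (suffixPos k t') ↔ τ t < τ t' := by
  rw [Fin.lt_def, blockPerm_val, blockPerm_val, blockVal_suffixPos, blockVal_suffixPos,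
    Fin.lt_def]
  omega

lemma avoids231_blockPerm_iff : Avoids231 (blockPerm j τ hkn) ↔ Avoids231 τ :=
  avoids231_iff_of_suffix (isSeparatedDecreasingPrefix_blockPerm j τ hkn)
    (blockPerm_suffixPos_lt_iff j τ hkn)

lemma avoids3124_blockPerm_iff : Avoids3124 (blockPerm j τ hkn) ↔ Avoids3124 τ :=
  avoids3124_iff_of_suffix (isSeparatedDecreasingPrefix_blockPerm j τ hkn)
    (blockPerm_suffixPos_lt_iff j τ hkn)

end BlockPerm

lemma blockPerm_injective {n k : ℕ} (hkn : k < n) :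
    Function.Injective fun p : Fin k × Perm (Fin (n - k)) => blockPerm p.1 p.2 hkn.le := by
  rintro ⟨j, τ⟩ ⟨j', τ'⟩ h
  have key : ∀ t, j + 1 + (τ t).val = j' + 1 + τ' t := fun t => by
    rw [← blockVal_suffixPos, ← blockVal_suffixPos, ← blockPerm_val _ _ hkn.le,
      ← blockPerm_val _ _ hkn.le]
    exact congrArg (fun σ : Perm (Fin n) => (σ (suffixPos k t)).val) h
  -- `j + 1` is the smallest entry after position `k`
  have h₁ := key (τ.symm ⟨0, by omega⟩)
  have h₂ := key (τ'.symm ⟨0, by omega⟩)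
  simp only [Equiv.apply_symm_apply] at h₁ h₂
  have hj : j = j' := Fin.ext (by omega)
  have hτ : τ = τ' := Equiv.ext fun t => Fin.ext (by have := key t; omega)
  rw [hj, hτ]

lemma exists_blockPerm_eq {n k : ℕ} (hkn : k < n) {σ : Perm (Fin n)} (h231 : Avoids231 σ)
    (h3124 : Avoids3124 σ) {c : Fin n} (hck : c.val + 1 = k) (hc : (σ c).val = 0) :
    ∃ j τ, Avoids231 τ ∧ Avoids3124 τ ∧ blockPerm j τ hkn.le = σ := by
  have hp : IsSeparatedDecreasingPrefix k σ :=
    hck ▸ isSeparatedDecreasingPrefix_of_avoids h231 h3124 fun _ =>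
      Fin.le_def.2 (hc ▸ Nat.zero_le _)
  obtain ⟨m, hm0, hmk, hbounds⟩ := exists_suffix_values_Ico hkn hp (by omega) hc
  obtain ⟨τ, hτ⟩ := exists_perm_suffixPos_eq_add hbounds
  have hpat : ∀ t t', σ (suffixPos k t) < σ (suffixPos k t') ↔ τ t < τ t' := fun t t' => by
    rw [Fin.lt_def, Fin.lt_def, hτ, hτ]
    omega
  refine ⟨⟨m - 1, by omega⟩, τ, (avoids231_iff_of_suffix hp hpat).1 h231,
    (avoids3124_iff_of_suffix hp hpat).1 h3124, ?_⟩
  refine eq_of_strictAntiOn_of_eqOn_suffix hkn.le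
    (isSeparatedDecreasingPrefix_blockPerm _ τ hkn.le).strictAntiOn hp.strictAntiOn fun i hi => ?_
  obtain ⟨t, rfl⟩ := exists_suffixPos_eq hi
  refine Fin.ext ?_
  rw [blockPerm_val, blockVal_suffixPos, hτ, Fin.val_mk]
  omega

/-- For `1 ≤ k < n`, the number of (231,3124)-avoiding permutations of `[n]`
with the value 1 in position `k` equals `k` times the number of
(231,3124)-avoiding permutations of `[n-k]`. (0-indexed: `σ (k-1) = 0`.) -/
theorem stmt_18 (n k : ℕ) (hk : 1 ≤ k) (hkn : k < n) :
    Nat.card {σ : Equiv.Perm (Fin n) //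
        Avoids231 σ ∧ Avoids3124 σ ∧ σ ⟨k - 1, by omega⟩ = ⟨0, by omega⟩} =
      k * Nat.card {σ : Equiv.Perm (Fin (n - k)) // Avoids231 σ ∧ Avoids3124 σ} := by
  have hck : (⟨k - 1, by omega⟩ : Fin n).val + 1 = k := by simp only; omega
  let F (p : Fin k × {τ : Perm (Fin (n - k)) // Avoids231 τ ∧ Avoids3124 τ}) :
      {σ : Perm (Fin n) // Avoids231 σ ∧ Avoids3124 σ ∧ σ ⟨k - 1, by omega⟩ = ⟨0, by omega⟩} :=
    ⟨blockPerm p.1 p.2 hkn.le, (avoids231_blockPerm_iff _ _ _).2 p.2.2.1,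
      (avoids3124_blockPerm_iff _ _ _).2 p.2.2.2, Fin.ext (blockPerm_val_eq_zero _ _ _ hck)⟩
  have hF : Function.Bijective F := by
    refine ⟨fun p q hpq => ?_, fun σ => ?_⟩
    · obtain ⟨hj, hτ⟩ := Prod.ext_iff.1
        (blockPerm_injective hkn (a₁ := (p.1, p.2)) (a₂ := (q.1, q.2))
          (congrArg Subtype.val hpq))
      exact Prod.ext hj (Subtype.ext hτ)
    · obtain ⟨j, τ, h231, h3124, hσ⟩ :=
        exists_blockPerm_eq hkn σ.2.1 σ.2.2.1 hck (congrArg Fin.val σ.2.2.2)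
      exact ⟨(j, ⟨τ, h231, h3124⟩), Subtype.ext hσ⟩
  rw [← Nat.card_eq_of_bijective F hF, Nat.card_prod, Nat.card_eq_fintype_card (α := Fin k),
    Fintype.card_fin]
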